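/- Let n ≥ 2 and ψ ∈ (0, π/2]. Let v : I → ℝ^{n−1} and ρ : I → (0, ∞) be three times continuously differentiable curves on an open interval I satisfying, for all t ∈ I, the geodesic equations v̈ + (2|v̇|² v − 4⟨v, v̇⟩ v̇)/(|v|² + 1) + (2ρ̇/ρ) v̇ = 0 and ρ̈ = 4 ρ sin²ψ |v̇|²/(|v|² + 1)². Define α : I → ℝ^{n+1} by α(t) = (2 v(t) sin ψ/(|v(t)|² + 1), sin ψ (|v(t)|² − 1)/(|v(t)|² + 1), cos ψ). Then for all t ∈ I: (4|v̇|²(1 + 2 sin²ψ)/(|v|² + 1)² + 6ρ̇²/ρ²) · α̇(t) + (6ρ̇/ρ) · α̈(t) + α⃛(t) = 0; in particular {α̇(t), α̈(t), α⃛(t)} is everywhere linearly dependent. -/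

import Mathlib

/-!
In stereographic coordinates the first geodesic equation says that `γ = σ ∘ v`, with `σ` the
inverse stereographic projection, is a reparametrised great circle: with `r = ρ'/ρ` and
`s = 4|v'|²/(|v|²+1)²` (the squared speed of `γ`) one has `γ'' = -2r γ' - s γ`, and moreover
`s' = -4rs`. The second geodesic equation gives `r' = sin²ψ · s - r²`. Differentiating the
formula for `γ''` once more and eliminating `s γ` with it yields the third-order relation for
`α = sin ψ · γ + cos ψ · e_{n+1}`.
-/

open scoped InnerProductSpace

noncomputable def embCoord (m n : ℕ) (v : EuclideanSpace ℝ (Fin m)) :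
    EuclideanSpace ℝ (Fin n) :=
  (WithLp.equiv 2 (Fin n → ℝ)).symm (fun i => if h : (i : ℕ) < m then v ⟨i, h⟩ else 0)

noncomputable def embCoordL (m n : ℕ) :
    EuclideanSpace ℝ (Fin m) →L[ℝ] EuclideanSpace ℝ (Fin n) :=
  LinearMap.toContinuousLinearMap
    { toFun := embCoord m n
      map_add' := fun x y => by
        ext i
        simp only [embCoord, WithLp.equiv_symm_apply, PiLp.toLp_apply, PiLp.add_apply]
        split <;> simp
      map_smul' := fun r x => by
        ext i
        simp only [embCoord, WithLp.equiv_symm_apply, PiLp.toLp_apply, PiLp.smul_apply,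
          RingHom.id_apply, smul_eq_mul]
        split <;> simp }

@[simp]
theorem embCoordL_apply (m n : ℕ) (x : EuclideanSpace ℝ (Fin m)) :
    embCoordL m n x = embCoord m n x := rfl

section Stereographic

variable {F G : Type*} [NormedAddCommGroup F] [InnerProductSpace ℝ F]
  [NormedAddCommGroup G] [NormedSpace ℝ G]

/-- Inverse stereographic projection from the pole `e`, the chart domain `F` being placed in `G`
by `L`; it takes values in the unit sphere when `L` is an isometry onto `e`'s orthogonal
complement and `‖e‖ = 1`. -/
noncomputable def stereoInv (L : F →L[ℝ] G) (e : G) (x : F) : G :=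
  (2 / (‖x‖ ^ 2 + 1)) • L x + ((‖x‖ ^ 2 - 1) / (‖x‖ ^ 2 + 1)) • e

noncomputable def stereoInvDeriv (L : F →L[ℝ] G) (e : G) (x w : F) : G :=
  (2 / (‖x‖ ^ 2 + 1)) • L w - (4 * ⟪x, w⟫_ℝ / (‖x‖ ^ 2 + 1) ^ 2) • (L x - e)

variable {v v' : ℝ → F} {w a : F} {t : ℝ}

omit [InnerProductSpace ℝ F] in
theorem normSq_add_one_ne_zero (x : F) : ‖x‖ ^ 2 + 1 ≠ 0 := by positivity

theorem hasDerivAt_stereoInv_comp (L : F →L[ℝ] G) (e : G) (hv : HasDerivAt v w t) :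
    HasDerivAt (fun u => stereoInv L e (v u)) (stereoInvDeriv L e (v t) w) t := by
  have hQ := hv.norm_sq.add_const 1
  have h := ((hasDerivAt_const t 2).fun_div hQ (normSq_add_one_ne_zero _)).fun_smul
    (L.hasFDerivAt.comp_hasDerivAt t hv) |>.add
    (((hv.norm_sq.sub_const 1).fun_div hQ (normSq_add_one_ne_zero _)).smul_const e)
  refine h.congr_deriv ?_
  simp only [stereoInvDeriv, Function.comp_apply]
  have hQ₀ := normSq_add_one_ne_zero (v t)
  match_scalars <;> field_simp <;> ring

/- `hgeo` is the geodesic equation of the round metric `4 |dx|² / (|x|² + 1)²`, up to the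
friction term `μ • v'` produced by a reparametrisation. -/
theorem hasDerivAt_stereoInvDeriv_comp_of_geodesic (L : F →L[ℝ] G) (e : G) (μ : ℝ)
    (hv : HasDerivAt v (v' t) t) (hv' : HasDerivAt v' a t)
    (hgeo : a + (2 * ‖v' t‖ ^ 2 / (‖v t‖ ^ 2 + 1)) • v t
      - (4 * ⟪v t, v' t⟫_ℝ / (‖v t‖ ^ 2 + 1)) • v' t + μ • v' t = 0) :
    HasDerivAt (fun u => stereoInvDeriv L e (v u) (v' u))
      (-μ • stereoInvDeriv L e (v t) (v' t)
        - (4 * ‖v' t‖ ^ 2 / (‖v t‖ ^ 2 + 1) ^ 2) • stereoInv L e (v t)) t := by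
  have hQ := hv.norm_sq.add_const 1
  have hL := L.hasFDerivAt.comp_hasDerivAt t hv
  have hL' := L.hasFDerivAt.comp_hasDerivAt t hv'
  have h := ((hasDerivAt_const t 2).fun_div hQ (normSq_add_one_ne_zero _)).fun_smul hL' |>.sub
    ((((hasDerivAt_const t 4).fun_mul (hv.inner ℝ hv')).fun_div (hQ.fun_pow 2)
      (pow_ne_zero 2 (normSq_add_one_ne_zero _))).fun_smul (hL.sub_const e))
  obtain rfl : a = (4 * ⟪v t, v' t⟫_ℝ / (‖v t‖ ^ 2 + 1) - μ) • v' t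
      - (2 * ‖v' t‖ ^ 2 / (‖v t‖ ^ 2 + 1)) • v t := by
    rw [← sub_eq_zero, ← hgeo]; module
  refine HasDerivAt.congr_deriv (f := fun u => stereoInvDeriv L e (v u) (v' u)) h ?_
  simp only [stereoInvDeriv, stereoInv, Function.comp_apply, map_sub, map_smul, inner_sub_right,
    real_inner_smul_right, real_inner_self_eq_norm_sq]
  have hQ₀ := normSq_add_one_ne_zero (v t)
  match_scalars <;> field_simp <;> ring

theorem hasDerivAt_stereo_speed_sq_of_geodesic (μ : ℝ)
    (hv : HasDerivAt v (v' t) t) (hv' : HasDerivAt v' a t)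
    (hgeo : a + (2 * ‖v' t‖ ^ 2 / (‖v t‖ ^ 2 + 1)) • v t
      - (4 * ⟪v t, v' t⟫_ℝ / (‖v t‖ ^ 2 + 1)) • v' t + μ • v' t = 0) :
    HasDerivAt (fun u => 4 * ‖v' u‖ ^ 2 / (‖v u‖ ^ 2 + 1) ^ 2)
      (-(2 * μ * (4 * ‖v' t‖ ^ 2 / (‖v t‖ ^ 2 + 1) ^ 2))) t := by
  have h := (hv'.norm_sq.const_mul 4).fun_div ((hv.norm_sq.add_const 1).fun_pow 2)
    (pow_ne_zero 2 (normSq_add_one_ne_zero _))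
  obtain rfl : a = (4 * ⟪v t, v' t⟫_ℝ / (‖v t‖ ^ 2 + 1) - μ) • v' t
      - (2 * ‖v' t‖ ^ 2 / (‖v t‖ ^ 2 + 1)) • v t := by
    rw [← sub_eq_zero, ← hgeo]; module
  refine h.congr_deriv ?_
  simp only [inner_sub_right, real_inner_smul_right, real_inner_self_eq_norm_sq,
    real_inner_comm (v t)]
  have hQ₀ := normSq_add_one_ne_zero (v t)
  field_simp
  ring

theorem second_deriv_eq_of_stereoInv_comp_of_geodesic {I : Set ℝ} (hI : IsOpen I)
    (L : F →L[ℝ] G) (e c : G) (lam : ℝ) {v'' : ℝ → F} {μ : ℝ → ℝ} {α α' α'' : ℝ → G}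
    (hα : ∀ u, α u = lam • stereoInv L e (v u) + c)
    (hv : ∀ u ∈ I, HasDerivAt v (v' u) u) (hv' : ∀ u ∈ I, HasDerivAt v' (v'' u) u)
    (hgeo : ∀ u ∈ I, v'' u + (2 * ‖v' u‖ ^ 2 / (‖v u‖ ^ 2 + 1)) • v u
      - (4 * ⟪v u, v' u⟫_ℝ / (‖v u‖ ^ 2 + 1)) • v' u + μ u • v' u = 0)
    (hα' : ∀ u ∈ I, HasDerivAt α (α' u) u) (hα'' : ∀ u ∈ I, HasDerivAt α' (α'' u) u) :
    ∀ u ∈ I, α'' u = -μ u • α' u - (4 * ‖v' u‖ ^ 2 / (‖v u‖ ^ 2 + 1) ^ 2) • (α u - c) := by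
  have hα'_eq : ∀ u ∈ I, α' u = lam • stereoInvDeriv L e (v u) (v' u) := fun u hu =>
    (hα' u hu).unique ((((hasDerivAt_stereoInv_comp L e (hv u hu)).const_smul lam).add_const c)
      |>.congr_of_eventuallyEq (.of_forall hα))
  intro u hu
  have h := (hasDerivAt_stereoInvDeriv_comp_of_geodesic L e _ (hv u hu) (hv' u hu) (hgeo u hu)
    |>.const_smul lam).congr_of_eventuallyEq (Filter.eventuallyEq_of_mem (hI.mem_nhds hu) hα'_eq)
  rw [(hα'' u hu).unique h, hα'_eq u hu, hα u]
  module

end Stereographic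

section ThirdOrder

variable {G : Type*} [NormedAddCommGroup G] [NormedSpace ℝ G]

theorem third_order_relation_of_second_order {γ γ' γ'' : ℝ → G} {γ''' c : G} {r s : ℝ → ℝ}
    {k t : ℝ} (hγ : HasDerivAt γ (γ' t) t) (hγ' : HasDerivAt γ' (γ'' t) t)
    (hγ'' : HasDerivAt γ'' γ''' t)
    (h2 : γ'' =ᶠ[nhds t] fun u => -(2 * r u) • γ' u - s u • (γ u - c))
    (hr : HasDerivAt r (k * s t - r t ^ 2) t) (hs : HasDerivAt s (-(4 * r t * s t)) t) :
    (s t * (1 + 2 * k) + 6 * r t ^ 2) • γ' t + (6 * r t) • γ'' t + γ''' = 0 := by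
  have h3 := (((hr.const_mul 2).fun_neg.fun_smul hγ').fun_sub
    (hs.fun_smul (hγ.sub_const c))).congr_of_eventuallyEq h2
  rw [hγ''.unique h3, h2.eq_of_nhds]
  module

theorem not_linearIndependent_of_smul_add_smul_add_eq_zero {x y z : G} (a b : ℝ)
    (h : a • x + b • y + z = 0) : ¬ LinearIndependent ℝ ![x, y, z] := fun hli => by
  simpa using Fintype.linearIndependent_iff.mp hli ![a, b, 1]
    (by simpa [Fin.sum_univ_three] using h) 2

end ThirdOrder

/-- Let `(v, ρ)` be a `C³` solution of the geodesic equations on the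
cone of aperture `ψ` in `ℝ^{n+1}` directed along `(0, …, 0, 1)`, and let
`α = (2 v sin ψ/(|v|²+1), sin ψ (|v|²−1)/(|v|²+1), cos ψ)` be the radial projection of the
corresponding curve onto the unit sphere. Then
`(4|v̇|²(1 + 2 sin²ψ)/(|v|² + 1)² + 6ρ̇²/ρ²) α̇ + (6ρ̇/ρ) α̈ + α⃛ = 0` on `I`; in
particular `{α̇, α̈, α⃛}` is everywhere linearly dependent. -/
theorem alpha_third_order_relation
    (n : ℕ) (ψ : ℝ)
    (I : Set ℝ) (hIopen : IsOpen I)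
    (v v' v'' : ℝ → EuclideanSpace ℝ (Fin (n - 1)))
    (ρ ρ' ρ'' : ℝ → ℝ) (hρpos : ∀ t ∈ I, 0 < ρ t)
    (hv1 : ∀ t ∈ I, HasDerivAt v (v' t) t)
    (hv2 : ∀ t ∈ I, HasDerivAt v' (v'' t) t)
    (hρ1 : ∀ t ∈ I, HasDerivAt ρ (ρ' t) t)
    (hρ2 : ∀ t ∈ I, HasDerivAt ρ' (ρ'' t) t)
    (hgeo1 : ∀ t ∈ I,
      v'' t + (2 * ‖v' t‖ ^ 2 / (‖v t‖ ^ 2 + 1)) • v t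
          - (4 * ⟪v t, v' t⟫_ℝ / (‖v t‖ ^ 2 + 1)) • v' t
          + (2 * ρ' t / ρ t) • v' t = 0)
    (hgeo2 : ∀ t ∈ I,
      ρ'' t = 4 * ρ t * Real.sin ψ ^ 2 * ‖v' t‖ ^ 2 / (‖v t‖ ^ 2 + 1) ^ 2)
    (α α' α'' α''' : ℝ → EuclideanSpace ℝ (Fin (n + 1)))
    (hα : ∀ t, α t =
      (2 * Real.sin ψ / (‖v t‖ ^ 2 + 1)) • embCoord (n - 1) (n + 1) (v t)
      + (Real.sin ψ * (‖v t‖ ^ 2 - 1) / (‖v t‖ ^ 2 + 1)) •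
          EuclideanSpace.single (⟨n - 1, by omega⟩ : Fin (n + 1)) 1
      + Real.cos ψ • EuclideanSpace.single (⟨n, by omega⟩ : Fin (n + 1)) 1)
    (hα1 : ∀ t ∈ I, HasDerivAt α (α' t) t)
    (hα2 : ∀ t ∈ I, HasDerivAt α' (α'' t) t)
    (hα3 : ∀ t ∈ I, HasDerivAt α'' (α''' t) t) :
    ∀ t ∈ I,
      (4 * ‖v' t‖ ^ 2 * (1 + 2 * Real.sin ψ ^ 2) / (‖v t‖ ^ 2 + 1) ^ 2
          + 6 * (ρ' t) ^ 2 / (ρ t) ^ 2) • α' t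
        + (6 * ρ' t / ρ t) • α'' t + α''' t = 0 ∧
      ¬ LinearIndependent ℝ ![α' t, α'' t, α''' t] := by
  have hα'' := second_deriv_eq_of_stereoInv_comp_of_geodesic hIopen (embCoordL (n - 1) (n + 1))
    (EuclideanSpace.single ⟨n - 1, by omega⟩ 1)
    (Real.cos ψ • EuclideanSpace.single ⟨n, by omega⟩ 1) (Real.sin ψ)
    (fun u => by rw [hα u]; simp only [stereoInv, embCoordL_apply]; module)
    hv1 hv2 hgeo1 hα1 hα2
  intro t ht
  set s : ℝ → ℝ := fun u => 4 * ‖v' u‖ ^ 2 / (‖v u‖ ^ 2 + 1) ^ 2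
  have hρ₀ := (hρpos t ht).ne'
  have hr : HasDerivAt (fun u => ρ' u / ρ u) (Real.sin ψ ^ 2 * s t - (ρ' t / ρ t) ^ 2) t := by
    refine ((hρ2 t ht).div (hρ1 t ht) hρ₀).congr_deriv ?_
    have hQ₀ := normSq_add_one_ne_zero (v t)
    rw [hgeo2 t ht]
    simp only [s]
    field_simp
  have hs : HasDerivAt s (-(4 * (ρ' t / ρ t) * s t)) t :=
    (hasDerivAt_stereo_speed_sq_of_geodesic _ (hv1 t ht) (hv2 t ht) (hgeo1 t ht)).congr_deriv
      (by ring)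
  have hrel := third_order_relation_of_second_order (hα1 t ht) (hα2 t ht) (hα3 t ht)
    (Filter.eventuallyEq_of_mem (hIopen.mem_nhds ht) fun u hu => by rw [hα'' u hu, mul_div_assoc])
    hr hs
  have hrel' : (4 * ‖v' t‖ ^ 2 * (1 + 2 * Real.sin ψ ^ 2) / (‖v t‖ ^ 2 + 1) ^ 2
      + 6 * (ρ' t) ^ 2 / (ρ t) ^ 2) • α' t + (6 * ρ' t / ρ t) • α'' t + α''' t = 0 := by
    convert hrel using 4
    · simp only [s]; ring
    · ring
  exact ⟨hrel', not_linearIndependent_of_smul_add_smul_add_eq_zero _ _ hrel'⟩
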